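/- Let n ≥ m ≥ 1 and let A be an m × n nonnegative real matrix whose entries are at most 1 and whose entry sum |A|₁ satisfies |A|₁ ≥ n. Then ‖A‖_{S_1} ≤ |A|₁/√(mn) + √((m-1)(|A|₂² − |A|₁²/(mn))). -/

import Mathlib

/-!
The trace norm is `∑ √λᵢ` over the eigenvalues `λᵢ` of `A Aᵀ`, whose sum is `|A|₂²`. Splitting off
the largest one `λ` and applying Cauchy–Schwarz to the other `m - 1` terms gives
`‖A‖_{S_1} ≤ √λ + √((m - 1)(|A|₂² - λ))`. Testing `A Aᵀ` on the all-ones vector gives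
`√λ ≥ |A|₁ / √(mn)`, and `t ↦ t + √((m - 1)(|A|₂² - t²))` is decreasing on `t ≥ |A|₁ / √(mn)`
because `|A|₂² ≤ |A|₁ ≤ |A|₁² / n`.
-/

open Finset

/-- Singular values (unsorted) of a complex matrix: square roots of eigenvalues of `A * Aᴴ`. -/
noncomputable def svalC {m n : ℕ} (A : Matrix (Fin m) (Fin n) ℂ) : Fin m → ℝ :=
  fun i => Real.sqrt ((Matrix.isHermitian_mul_conjTranspose_self A).eigenvalues i)

/-- Singular values of a complex matrix sorted in decreasing order. -/
noncomputable def svalCSorted {m n : ℕ} (A : Matrix (Fin m) (Fin n) ℂ) : Fin m → ℝ :=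
  svalC A ∘ ⇑(Tuple.sort (fun i => -(svalC A i)))

/-- Singular values (unsorted) of a real matrix. -/
noncomputable def svalR {m n : ℕ} (A : Matrix (Fin m) (Fin n) ℝ) : Fin m → ℝ :=
  fun i => Real.sqrt ((Matrix.isHermitian_mul_conjTranspose_self A).eigenvalues i)

/-- Singular values of a real matrix sorted in decreasing order. -/
noncomputable def svalRSorted {m n : ℕ} (A : Matrix (Fin m) (Fin n) ℝ) : Fin m → ℝ :=
  svalR A ∘ ⇑(Tuple.sort (fun i => -(svalR A i)))

/-- Ky Fan `k`-norm of a complex matrix: the sum of its `k` largest singular values. -/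
noncomputable def kyFanC {m n : ℕ} (A : Matrix (Fin m) (Fin n) ℂ) (k : ℕ) : ℝ :=
  ∑ i : Fin m, if (i : ℕ) < k then svalCSorted A i else 0

/-- Ky Fan `k`-norm of a real matrix. -/
noncomputable def kyFanR {m n : ℕ} (A : Matrix (Fin m) (Fin n) ℝ) (k : ℕ) : ℝ :=
  ∑ i : Fin m, if (i : ℕ) < k then svalRSorted A i else 0

/-- The adjacency matrix of a simple graph is Hermitian (over `ℝ`). -/
lemma adjHerm {n : ℕ} (G : SimpleGraph (Fin n)) [DecidableRel G.Adj] :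
    (G.adjMatrix ℝ).IsHermitian := by
  have h := G.isSymm_adjMatrix (α := ℝ)
  simpa [Matrix.IsHermitian, Matrix.conjTranspose, Matrix.IsSymm, Matrix.transpose, Matrix.map,
    star_trivial] using h

/-- Singular values of a graph (unsorted). -/
noncomputable def gsval {n : ℕ} (G : SimpleGraph (Fin n)) [DecidableRel G.Adj] : Fin n → ℝ :=
  svalR (G.adjMatrix ℝ)

/-- Singular values of a graph sorted in decreasing order. -/
noncomputable def gsvalSorted {n : ℕ} (G : SimpleGraph (Fin n)) [DecidableRel G.Adj] : Fin n → ℝ :=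
  svalRSorted (G.adjMatrix ℝ)

/-- Eigenvalues of a graph sorted in decreasing order: `geigSorted G 0 = μ₁ ≥ ⋯ ≥ μₙ`. -/
noncomputable def geigSorted {n : ℕ} (G : SimpleGraph (Fin n)) [DecidableRel G.Adj] : Fin n → ℝ :=
  (adjHerm G).eigenvalues ∘ ⇑(Tuple.sort (fun i => -((adjHerm G).eigenvalues i)))

/-- Ky Fan `k`-norm of a graph. -/
noncomputable def kyFanG {n : ℕ} (G : SimpleGraph (Fin n)) [DecidableRel G.Adj] (k : ℕ) : ℝ :=
  kyFanR (G.adjMatrix ℝ) k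

open Matrix

section

variable {ι κ : Type*} [Fintype ι] [DecidableEq ι] [Fintype κ]

lemma Matrix.IsHermitian.dotProduct_mulVec_le {B : Matrix ι ι ℝ} (hB : B.IsHermitian) {μ : ℝ}
    (hμ : ∀ i, hB.eigenvalues i ≤ μ) (x : ι → ℝ) : x ⬝ᵥ (B *ᵥ x) ≤ μ * (x ⬝ᵥ x) := by
  set U : Matrix ι ι ℝ := (hB.eigenvectorUnitary : Matrix ι ι ℝ)
  have hxU : x ᵥ* U = star U *ᵥ x := by
    rw [star_eq_conjTranspose, conjTranspose_eq_transpose_of_trivial, mulVec_transpose]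
  have hxx : (x ᵥ* U) ⬝ᵥ (x ᵥ* U) = x ⬝ᵥ x := by
    nth_rewrite 2 [hxU]
    rw [dotProduct_mulVec, vecMul_vecMul, (mem_unitaryGroup_iff).mp hB.eigenvectorUnitary.2,
      vecMul_one]
  have hBx : x ⬝ᵥ (B *ᵥ x) = ∑ i, hB.eigenvalues i * (x ᵥ* U) i ^ 2 := by
    conv_lhs => rw [hB.spectral_theorem, Unitary.conjStarAlgAut_apply]
    rw [← mulVec_mulVec, ← mulVec_mulVec, dotProduct_mulVec, ← hxU]
    simp [dotProduct, mulVec_diagonal, sq, mul_left_comm, U]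
  rw [hBx, ← hxx, dotProduct, mul_sum]
  exact sum_le_sum fun i _ => by
    rw [← sq]; exact mul_le_mul_of_nonneg_right (hμ i) (sq_nonneg _)

lemma sum_eigenvalues_mul_conjTranspose_self (A : Matrix ι κ ℝ) :
    ∑ i, (isHermitian_mul_conjTranspose_self A).eigenvalues i = ∑ i, ∑ j, A i j ^ 2 := by
  have := (isHermitian_mul_conjTranspose_self A).trace_eq_sum_eigenvalues
  simp only [RCLike.ofReal_real_eq_id, id] at this
  rw [← this, trace]
  simp [mul_apply, sq]

lemma sq_sum_le_card_mul_card_mul_eigenvalue (A : Matrix ι κ ℝ) {μ : ℝ}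
    (hμ : ∀ i, (isHermitian_mul_conjTranspose_self A).eigenvalues i ≤ μ) :
    (∑ i, ∑ j, A i j) ^ 2 ≤ Fintype.card ι * Fintype.card κ * μ := by
  set w : κ → ℝ := 1 ᵥ* A
  have hw : ∑ i, ∑ j, A i j = ∑ j, w j := by
    simp [w, vecMul, dotProduct, sum_comm (γ := κ)]
  have hquad : (1 : ι → ℝ) ⬝ᵥ ((A * Aᴴ) *ᵥ 1) = w ⬝ᵥ w := by
    rw [← mulVec_mulVec, dotProduct_mulVec, conjTranspose_eq_transpose_of_trivial,
      ← vecMul_transpose, transpose_transpose]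
  have hray := (isHermitian_mul_conjTranspose_self A).dotProduct_mulVec_le hμ 1
  rw [hquad] at hray
  calc (∑ i, ∑ j, A i j) ^ 2 = (∑ j, w j) ^ 2 := by rw [hw]
    _ ≤ Fintype.card κ * (w ⬝ᵥ w) := by
      simpa [dotProduct, sq] using sq_sum_le_card_mul_sum_sq (s := univ) (f := w)
    _ ≤ Fintype.card κ * (μ * Fintype.card ι) := by
      gcongr
      simpa using hray
    _ = _ := by ring

end

lemma sum_sqrt_le_sqrt_add_sqrt {ι : Type*} [DecidableEq ι] {s : Finset ι} {f : ι → ℝ}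
    (hf : ∀ i ∈ s, 0 ≤ f i) {k : ι} (hk : k ∈ s) :
    ∑ i ∈ s, √(f i) ≤ √(f k) + √((#s - 1) * (∑ i ∈ s, f i - f k)) := by
  rw [← add_sum_erase s _ hk, ← add_sum_erase s f hk, add_sub_cancel_left]
  gcongr
  have hcard : (#(s.erase k) : ℝ) = #s - 1 := by
    rw [card_erase_of_mem hk, Nat.cast_pred (card_pos.2 ⟨k, hk⟩)]
  rw [← hcard]
  refine Real.le_sqrt_of_sq_le ((sq_sum_le_card_mul_sum_sq).trans_eq ?_)
  congr 1
  exact sum_congr rfl fun i hi => Real.sq_sqrt (hf i (mem_of_mem_erase hi))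

lemma add_sqrt_mul_sub_sq_le {c F a t : ℝ} (hc : 0 ≤ c) (ha : 0 ≤ a) (hat : a ≤ t)
    (htF : t ^ 2 ≤ F) (hFa : F ≤ (c + 1) * a ^ 2) :
    t + √(c * (F - t ^ 2)) ≤ a + √(c * (F - a ^ 2)) := by
  have hat2 : a ^ 2 ≤ t ^ 2 := pow_le_pow_left₀ ha hat 2
  have hu := Real.sq_sqrt (mul_nonneg hc (sub_nonneg.2 htF))
  have hv := Real.sq_sqrt (mul_nonneg hc (sub_nonneg.2 (hat2.trans htF)))
  set u := √(c * (F - t ^ 2))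
  set v := √(c * (F - a ^ 2))
  have hu0 : 0 ≤ u := Real.sqrt_nonneg _
  have huv : u ≤ v := Real.sqrt_le_sqrt (by nlinarith [mul_le_mul_of_nonneg_left hat2 hc])
  have hvu : v + u ≤ c * (t + a) := by
    nlinarith [mul_nonneg hc ha, mul_le_mul_of_nonneg_left hat hc]
  by_contra! h
  have hta : a < t := by linarith
  -- `v ^ 2 - u ^ 2 = c (t - a) (t + a)` forces `c (t + a) (t + u - a - v) ≤ 0`
  have hct : c * (t + a) ≤ 0 := by
    refine nonpos_of_mul_nonpos_left ?_ (sub_pos.2 h)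
    nlinarith [mul_nonneg (sub_nonneg.2 huv) (sub_nonneg.2 hvu)]
  have hc0 : c = 0 := le_antisymm (nonpos_of_mul_nonpos_left hct (by linarith)) hc
  subst hc0
  nlinarith

/-- For a nonnegative matrix with entries at most `1` and entry sum at least `n`:
`‖A‖_{S_1} ≤ |A|₁/√(mn) + √((m-1)(|A|₂² − |A|₁²/(mn)))`. -/
theorem trace_norm_le_nonneg {m n : ℕ} (hm : 1 ≤ m) (hmn : m ≤ n)
    (A : Matrix (Fin m) (Fin n) ℝ) (hA : ∀ i j, 0 ≤ A i j) (h1 : ∀ i j, A i j ≤ 1)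
    (hs : (n : ℝ) ≤ ∑ i, ∑ j, A i j) :
    ∑ i, svalR A i ≤
      (∑ i, ∑ j, A i j) / Real.sqrt ((m : ℝ) * n) +
        Real.sqrt (((m : ℝ) - 1) *
          ((∑ i, ∑ j, (A i j) ^ 2) - (∑ i, ∑ j, A i j) ^ 2 / ((m : ℝ) * n))) := by
  set s := ∑ i, ∑ j, A i j
  set F := ∑ i, ∑ j, A i j ^ 2
  set ev := (isHermitian_mul_conjTranspose_self A).eigenvalues
  have hev : ∀ i, 0 ≤ ev i := eigenvalues_self_mul_conjTranspose_nonneg A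
  have htr : ∑ i, ev i = F := sum_eigenvalues_mul_conjTranspose_self A
  obtain ⟨k, -, hk⟩ := exists_max_image univ ev ⟨⟨0, hm⟩, mem_univ _⟩
  have hn_pos : (0 : ℝ) < n := by exact_mod_cast hm.trans hmn
  have hmn_pos : (0 : ℝ) < m * n := mul_pos (by exact_mod_cast hm) hn_pos
  set a := s / √(m * n)
  have ha2 : a ^ 2 = s ^ 2 / (m * n) := by rw [div_pow, Real.sq_sqrt hmn_pos.le]
  have ha : 0 ≤ a := div_nonneg (hn_pos.le.trans hs) (Real.sqrt_nonneg _)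
  have hat : a ≤ √(ev k) := by
    refine Real.le_sqrt_of_sq_le (ha2 ▸ div_le_of_le_mul₀ hmn_pos.le (hev k) ?_)
    have := sq_sum_le_card_mul_card_mul_eigenvalue A fun i => hk i (mem_univ i)
    rw [Fintype.card_fin, Fintype.card_fin] at this
    linarith
  have htF : √(ev k) ^ 2 ≤ F := by
    rw [Real.sq_sqrt (hev k), ← htr]
    exact single_le_sum (fun i _ => hev i) (mem_univ k)
  have hFa : F ≤ (m - 1 + 1) * a ^ 2 := by
    have hFs : F ≤ s := sum_le_sum fun i _ => sum_le_sum fun j _ => by nlinarith [hA i j, h1 i j]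
    rw [sub_add_cancel, ha2, ← mul_div_assoc, mul_div_mul_left _ _ (by positivity),
      le_div_iff₀ hn_pos]
    nlinarith
  calc ∑ i, svalR A i ≤ √(ev k) + √((m - 1) * (F - ev k)) := by
        have := sum_sqrt_le_sqrt_add_sqrt (s := univ) (fun i _ => hev i) (mem_univ k)
        rwa [htr, card_univ, Fintype.card_fin] at this
    _ = √(ev k) + √((m - 1) * (F - √(ev k) ^ 2)) := by rw [Real.sq_sqrt (hev k)]
    _ ≤ a + √((m - 1) * (F - a ^ 2)) :=
        add_sqrt_mul_sub_sq_le (by simpa using hm) ha hat htF hFa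
    _ = _ := by rw [ha2]
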